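/- arXiv:2008.00225 — 9 statements merged into one kernel-verified Lean document; each statement's English description precedes it below -/
import Mathlib

section
/- For any graph G, γ_r(G) = γ(G) if and only if γ_s(G) = γ(G). -/
open Finset

variable {V : Type*}

/-- `S` is a dominating set of `G`. -/
def Dominating (G : SimpleGraph V) (S : Set V) : Prop :=
  ∀ v, v ∉ S → ∃ u ∈ S, G.Adj u v

/-- `S` is a secure dominating set of `G`. -/
def SecureDominating (G : SimpleGraph V) (S : Set V) : Prop :=
  Dominating G S ∧ ∀ v, v ∉ S → ∃ u ∈ S, G.Adj u v ∧ Dominating G ((S \ {u}) ∪ {v})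

/-- The domination number `γ(G)`. -/
noncomputable def domNum (G : SimpleGraph V) : ℕ :=
  sInf {n | ∃ S : Set V, Dominating G S ∧ S.ncard = n}

/-- The secure domination number `γ_s(G)`. -/
noncomputable def secDomNum (G : SimpleGraph V) : ℕ :=
  sInf {n | ∃ S : Set V, SecureDominating G S ∧ S.ncard = n}

/-- `v` is undefended with respect to the guard function `f`. -/
def Undefended (G : SimpleGraph V) (f : V → ℕ) (v : V) : Prop :=
  f v = 0 ∧ ∀ u, G.Adj u v → f u = 0

/-- `f` is a weak Roman dominating function on `G`. -/
def IsWRDF [DecidableEq V] (G : SimpleGraph V) (f : V → ℕ) : Prop :=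
  (∀ v, f v ≤ 2) ∧ ∀ v, f v = 0 → ∃ u, G.Adj u v ∧ 1 ≤ f u ∧
    ∀ w, ¬ Undefended G (Function.update (Function.update f u (f u - 1)) v 1) w

/-- The weak Roman domination number `γ_r(G)`. -/
noncomputable def weakRomanNum [Fintype V] [DecidableEq V] (G : SimpleGraph V) : ℕ :=
  sInf {n | ∃ f : V → ℕ, IsWRDF G f ∧ ∑ v, f v = n}

/-!
The support of a weak Roman dominating function dominates, so `γ ≤ γ_r`; and the indicator of a
secure dominating set is weak Roman, because moving its one guard from `u` to `v` is exactly the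
swap `(S \ {u}) ∪ {v}`, so `γ_r ≤ γ_s`. Conversely, if `γ_r = γ`, a minimum weak Roman dominating
function `f` satisfies `γ ≤ |supp f| ≤ ∑ f = γ`, which forces `f` to be the indicator of its
support; that support is then a secure dominating set of size `γ`.
-/

open Function

section Domination

variable (G : SimpleGraph V)

lemma dominating_univ : Dominating G Set.univ := fun v hv => (hv (Set.mem_univ v)).elim

lemma secureDominating_univ : SecureDominating G Set.univ :=
  ⟨dominating_univ G, fun v hv => (hv (Set.mem_univ v)).elim⟩

lemma domNum_le_ncard {S : Set V} (hS : Dominating G S) : domNum G ≤ S.ncard :=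
  Nat.sInf_le ⟨S, hS, rfl⟩

lemma secDomNum_le_ncard {S : Set V} (hS : SecureDominating G S) : secDomNum G ≤ S.ncard :=
  Nat.sInf_le ⟨S, hS, rfl⟩

lemma exists_secureDominating_ncard_eq_secDomNum :
    ∃ S, SecureDominating G S ∧ S.ncard = secDomNum G :=
  Nat.sInf_mem (s := {n | ∃ S : Set V, SecureDominating G S ∧ S.ncard = n})
    ⟨_, Set.univ, secureDominating_univ G, rfl⟩

lemma domNum_le_secDomNum : domNum G ≤ secDomNum G := by
  obtain ⟨S, hS, hcard⟩ := exists_secureDominating_ncard_eq_secDomNum G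
  exact hcard ▸ domNum_le_ncard G hS.1

lemma dominating_support_iff_forall_not_undefended (f : V → ℕ) :
    Dominating G (support f) ↔ ∀ w, ¬ Undefended G f w := by
  simp [Dominating, Undefended, and_comm]

end Domination

section WeakRoman

variable [DecidableEq V] (G : SimpleGraph V)

lemma support_update_update_of_eq_one {f : V → ℕ} {u : V} (v : V) (hu : f u = 1) :
    support (update (update f u (f u - 1)) v 1) = (support f \ {u}) ∪ {v} := by
  rw [hu, Nat.sub_self, support_update_of_ne_zero _ _ one_ne_zero, support_update_zero,
    Set.union_singleton]

lemma IsWRDF.dominating_support {f : V → ℕ} (hf : IsWRDF G f) : Dominating G (support f) := by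
  intro v hv
  obtain ⟨u, hadj, hu, -⟩ := hf.2 v (notMem_support.mp hv)
  exact ⟨u, Nat.one_le_iff_ne_zero.mp hu, hadj⟩

lemma isWRDF_indicator_iff (S : Set V) : IsWRDF G (S.indicator 1) ↔ SecureDominating G S := by
  have hsupp : support (S.indicator (1 : V → ℕ)) = S := by simp [Set.support_indicator]
  have hmove : ∀ {u} v, u ∈ S → ((∀ w, ¬ Undefended G
      (update (update (S.indicator 1) u (S.indicator 1 u - 1)) v 1) w) ↔
      Dominating G ((S \ {u}) ∪ {v})) := by
    intro u v hu
    rw [← dominating_support_iff_forall_not_undefended,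
      support_update_update_of_eq_one v (by simp [hu]), hsupp]
  constructor
  · rintro ⟨-, hf⟩
    have hsecure : ∀ v ∉ S, ∃ u ∈ S, G.Adj u v ∧ Dominating G ((S \ {u}) ∪ {v}) := by
      intro v hv
      obtain ⟨u, hadj, hu, hund⟩ := hf v (by simp [hv])
      have huS : u ∈ S := by by_contra h; simp [h] at hu
      exact ⟨u, huS, hadj, (hmove v huS).mp hund⟩
    exact ⟨fun v hv => (hsecure v hv).imp fun u hu => ⟨hu.1, hu.2.1⟩, hsecure⟩
  · rintro ⟨-, hS⟩
    refine ⟨fun v => ?_, fun v hv => ?_⟩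
    · by_cases hv : v ∈ S <;> simp [hv]
    · obtain ⟨u, huS, hadj, hdom⟩ := hS v (by simpa using hv)
      exact ⟨u, hadj, by simp [huS], (hmove v huS).mpr hdom⟩

end WeakRoman

section Weights

lemma indicator_support_le (f : V → ℕ) : (support f).indicator 1 ≤ f := by
  intro v
  by_cases hv : f v = 0 <;> simp [hv, Nat.one_le_iff_ne_zero]

variable [Fintype V]

lemma sum_indicator_one (S : Set V) : ∑ v, S.indicator (1 : V → ℕ) v = S.ncard := by
  classical
  simp [Set.indicator_apply, Set.ncard_eq_toFinset_card']

lemma ncard_support_le_sum (f : V → ℕ) : (support f).ncard ≤ ∑ v, f v := by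
  rw [← sum_indicator_one]
  exact Finset.sum_le_sum fun v _ => indicator_support_le f v

lemma eq_indicator_support_of_sum_le {f : V → ℕ} (h : ∑ v, f v ≤ (support f).ncard) :
    f = (support f).indicator 1 := by
  have hsum : ∑ v, (support f).indicator 1 v = ∑ v, f v :=
    (sum_indicator_one _).trans (le_antisymm (ncard_support_le_sum f) h)
  funext v
  exact ((Finset.sum_eq_sum_iff_of_le fun v _ => indicator_support_le f v).mp hsum v
    (Finset.mem_univ v)).symm

end Weights

section Comparison

variable [Fintype V] [DecidableEq V] (G : SimpleGraph V)

lemma exists_isWRDF_sum_eq_weakRomanNum : ∃ f, IsWRDF G f ∧ ∑ v, f v = weakRomanNum G :=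
  Nat.sInf_mem (s := {n | ∃ f : V → ℕ, IsWRDF G f ∧ ∑ v, f v = n})
    ⟨_, _, (isWRDF_indicator_iff G _).mpr (secureDominating_univ G), rfl⟩

lemma domNum_le_weakRomanNum : domNum G ≤ weakRomanNum G := by
  obtain ⟨f, hf, hsum⟩ := exists_isWRDF_sum_eq_weakRomanNum G
  calc domNum G ≤ (support f).ncard := domNum_le_ncard G hf.dominating_support
    _ ≤ ∑ v, f v := ncard_support_le_sum f
    _ = weakRomanNum G := hsum

lemma weakRomanNum_le_secDomNum : weakRomanNum G ≤ secDomNum G := by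
  obtain ⟨S, hS, hcard⟩ := exists_secureDominating_ncard_eq_secDomNum G
  exact Nat.sInf_le ⟨_, (isWRDF_indicator_iff G S).mpr hS, (sum_indicator_one S).trans hcard⟩

lemma secDomNum_le_domNum_of_weakRomanNum_eq (h : weakRomanNum G = domNum G) :
    secDomNum G ≤ domNum G := by
  obtain ⟨f, hf, hsum⟩ := exists_isWRDF_sum_eq_weakRomanNum G
  have hcard : (support f).ncard = domNum G :=
    le_antisymm ((ncard_support_le_sum f).trans (hsum.trans h).le)
      (domNum_le_ncard G hf.dominating_support)
  have hf_eq : f = (support f).indicator 1 :=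
    eq_indicator_support_of_sum_le (hsum.trans h |>.trans hcard.symm).le
  have hsec : SecureDominating G (support f) := (isWRDF_indicator_iff G _).mp (hf_eq ▸ hf)
  exact hcard ▸ secDomNum_le_ncard G hsec

end Comparison

theorem stmt2 {V : Type*} [Fintype V] [DecidableEq V] (G : SimpleGraph V) :
    weakRomanNum G = domNum G ↔ secDomNum G = domNum G := by
  constructor
  · intro h
    exact le_antisymm (secDomNum_le_domNum_of_weakRomanNum_eq G h) (domNum_le_secDomNum G)
  · intro h
    exact le_antisymm ((weakRomanNum_le_secDomNum G).trans h.le) (domNum_le_weakRomanNum G)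
end

section
/- Every 2-dominating set of a graph G is a secure dominating set; consequently γ_s(G) ≤ γ_2(G). -/
open Finset

variable {V : Type*}

/-- `S` is a 2-dominating set of `G`. -/
def TwoDominating (G : SimpleGraph V) (S : Set V) : Prop :=
  ∀ v, v ∉ S → ∃ u ∈ S, ∃ w ∈ S, u ≠ w ∧ G.Adj u v ∧ G.Adj w v

/-- The 2-domination number `γ₂(G)`. -/
noncomputable def twoDomNum (G : SimpleGraph V) : ℕ :=
  sInf {n | ∃ S : Set V, TwoDominating G S ∧ S.ncard = n}

namespace TwoDominating

variable {G : SimpleGraph V} {S : Set V}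

theorem dominating (hS : TwoDominating G S) : Dominating G S := by
  intro v hv
  obtain ⟨u, hu, -, -, -, huv, -⟩ := hS v hv
  exact ⟨u, hu, huv⟩

/-- A vertex outside `S` loses at most one of its two neighbours in `S` when `u` leaves. -/
theorem dominating_diff_singleton_union_singleton (hS : TwoDominating G S) {u v : V}
    (huv : G.Adj u v) : Dominating G ((S \ {u}) ∪ {v}) := by
  intro x hx
  by_cases hxu : x = u
  · exact ⟨v, Or.inr rfl, hxu ▸ huv.symm⟩
  have hxS : x ∉ S := fun h => hx (Or.inl ⟨h, hxu⟩)
  obtain ⟨a, ha, b, hb, hab, hax, hbx⟩ := hS x hxS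
  by_cases hau : a = u
  · exact ⟨b, Or.inl ⟨hb, fun hbu => hab (hau.trans hbu.symm)⟩, hbx⟩
  · exact ⟨a, Or.inl ⟨ha, hau⟩, hax⟩

theorem secureDominating (hS : TwoDominating G S) : SecureDominating G S := by
  refine ⟨hS.dominating, fun v hv => ?_⟩
  obtain ⟨u, hu, -, -, -, huv, -⟩ := hS v hv
  exact ⟨u, hu, huv, hS.dominating_diff_singleton_union_singleton huv⟩

end TwoDominating

theorem twoDominating_univ (G : SimpleGraph V) : TwoDominating G Set.univ :=
  fun v hv => absurd (Set.mem_univ v) hv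

theorem secDomNum_le_twoDomNum (G : SimpleGraph V) : secDomNum G ≤ twoDomNum G := by
  refine csInf_le_csInf (OrderBot.bddBelow _) ⟨_, Set.univ, twoDominating_univ G, rfl⟩ ?_
  rintro n ⟨S, hS, rfl⟩
  exact ⟨S, hS.secureDominating, rfl⟩

theorem stmt6 {V : Type*} (G : SimpleGraph V) :
    (∀ S : Set V, TwoDominating G S → SecureDominating G S) ∧
      secDomNum G ≤ twoDomNum G :=
  ⟨fun _ hS => hS.secureDominating, secDomNum_le_twoDomNum G⟩
end

section
/- For any connected graph G with at least 2 vertices, γ_r(G) ≤ ⌊2n(G)/3⌋. -/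
open Finset

variable {V : Type*}

/-!
Every graph without isolated vertices has a spanning forest of stars with at least two vertices
each: in a star forest with the fewest one-vertex stars, a one-vertex star `{x}` could join the
star of a neighbour `y` (if `y` is a leaf, it leaves its star to form `{x, y}`, taking the old
centre along when that centre would otherwise be left alone).
Put `min 2 (k - 1)` guards on the centre of a star with `k` vertices and none on its leaves.
A leaf is defended by its centre: after the move the centre keeps a guard unless its star is a
single edge, and then both ends of that edge are covered by the guard on the leaf. Since
`3 * min 2 (k - 1) ≤ 2 * k`, the weight is at most `2 n / 3`.
-/

namespace SimpleGraph

variable {G : SimpleGraph V} {p : V → V} {x y : V}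

/-- A spanning star forest, encoded by the map sending each vertex to the centre of its star. -/
structure IsStarMap (G : SimpleGraph V) (p : V → V) : Prop where
  idem : ∀ x, p (p x) = p x
  adj : ∀ x, p x ≠ x → G.Adj (p x) x

def IsSingletonStar (p : V → V) (x : V) : Prop := ∀ y, p y = x ↔ y = x

lemma IsSingletonStar.apply_eq (hx : IsSingletonStar p x) : p x = x := (hx x).2 rfl

lemma IsSingletonStar.eq_of_apply_eq (hx : IsSingletonStar p x) (hy : p y = x) : y = x :=
  (hx y).1 hy

section Update

variable [DecidableEq V]

lemma IsSingletonStar.of_update {a b : V} (h : IsSingletonStar (Function.update p a b) x)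
    (hb : b ≠ x) (ha : p a ≠ x) : IsSingletonStar p x := by
  intro w
  rw [← h w]
  by_cases hw : w = a
  · subst hw; simp [ha, hb]
  · simp [hw]

lemma IsStarMap.merge_singleton_into_centre (hp : G.IsStarMap p) (hx : IsSingletonStar p x)
    (hy : p y = y) (hxy : G.Adj x y) :
    G.IsStarMap (Function.update p x y) ∧
      ∀ z, IsSingletonStar (Function.update p x y) z → IsSingletonStar p z ∧ z ≠ x := by
  have hne : x ≠ y := hxy.ne
  have hpx := hx.apply_eq
  refine ⟨⟨fun z => ?_, fun z hz => ?_⟩, fun z hz => ?_⟩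
  · by_cases hzx : z = x
    · subst hzx; simp [hne.symm, hy]
    · have : p z ≠ x := fun h => hzx (hx.eq_of_apply_eq h)
      simp [hzx, this, hp.idem]
  · by_cases hzx : z = x
    · subst hzx; simpa using hxy.symm
    · simp only [Function.update_apply, hzx, if_false] at hz ⊢; exact hp.adj z hz
  · have hzx : z ≠ x := by
      rintro rfl; have h := hz.apply_eq; simp at h; exact hne h.symm
    have hyz : y ≠ z := by rintro rfl; exact hne (hz.eq_of_apply_eq (by simp))
    exact ⟨hz.of_update hyz (by rw [hpx]; exact hzx.symm), hzx⟩

lemma IsStarMap.merge_singleton_into_leaf (hp : G.IsStarMap p) (hx : IsSingletonStar p x)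
    (hy : p y ≠ y) (hxy : G.Adj x y) :
    G.IsStarMap (Function.update (Function.update p y y) x y) ∧
      ∀ z, IsSingletonStar (Function.update (Function.update p y y) x y) z →
        (IsSingletonStar p z ∨ z = p y) ∧ z ≠ x := by
  have hne : x ≠ y := hxy.ne
  have hpx := hx.apply_eq
  refine ⟨⟨fun z => ?_, fun z hz => ?_⟩, fun z hz => ?_⟩
  · by_cases hzx : z = x
    · subst hzx; simp [hne.symm]
    by_cases hzy : z = y
    · rw [hzy]; simp [hne.symm]
    · have h1 : p z ≠ x := fun h => hzx (hx.eq_of_apply_eq h)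
      have h2 : p z ≠ y := fun h => hy (h ▸ hp.idem z)
      simp [hzx, hzy, h1, h2, hp.idem]
  · by_cases hzx : z = x
    · subst hzx; simpa using hxy.symm
    by_cases hzy : z = y
    · rw [hzy, Function.update_of_ne hne.symm, Function.update_self] at hz; exact absurd rfl hz
    · simp only [Function.update_apply, hzx, hzy, if_false] at hz ⊢; exact hp.adj z hz
  · have hzx : z ≠ x := by
      rintro rfl; have h := hz.apply_eq; simp at h; exact hne h.symm
    have hyz : y ≠ z := by rintro rfl; exact hne (hz.eq_of_apply_eq (by simp))
    refine ⟨?_, hzx⟩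
    by_cases hzc : z = p y
    · exact Or.inr hzc
    · have h1 := hz.of_update hyz (by rw [Function.update_of_ne hne, hpx]; exact hzx.symm)
      exact Or.inl (h1.of_update hyz (Ne.symm hzc))

lemma IsStarMap.exists_fewer_singletonStars (hp : G.IsStarMap p) (hx : IsSingletonStar p x)
    (hxy : G.Adj x y) :
    ∃ q, G.IsStarMap q ∧ ∀ z, IsSingletonStar q z → IsSingletonStar p z ∧ z ≠ x := by
  by_cases hy : p y = y
  · exact ⟨_, hp.merge_singleton_into_centre hx hy hxy⟩
  obtain ⟨hq, hqp⟩ := hp.merge_singleton_into_leaf hx hy hxy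
  set q := Function.update (Function.update p y y) x y
  -- if the old star of `y` was `{p y, y}`, the singleton `{p y}` left behind joins `{x, y}`
  by_cases hc : IsSingletonStar q (p y)
  · have hqy : q y = y := by simp [q, hxy.ne.symm]
    obtain ⟨hr, hrq⟩ := hq.merge_singleton_into_centre hc hqy (hp.adj y hy)
    refine ⟨_, hr, fun z hz => ?_⟩
    obtain ⟨hzq, hzc⟩ := hrq z hz
    obtain ⟨hzp | rfl, hzx⟩ := hqp z hzq
    exacts [⟨hzp, hzx⟩, absurd rfl hzc]
  · refine ⟨q, hq, fun z hz => ?_⟩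
    obtain ⟨hzp | rfl, hzx⟩ := hqp z hz
    exacts [⟨hzp, hzx⟩, absurd hz hc]

end Update

theorem exists_isStarMap_forall_exists_ne [Finite V] (h : ∀ x, ∃ y, G.Adj x y) :
    ∃ p, G.IsStarMap p ∧ ∀ x, ∃ y ≠ x, p y = p x := by
  classical
  have := Fintype.ofFinite V
  obtain ⟨p, hp, hmin⟩ := (measure fun p : V → V => #{x | IsSingletonStar p x}).wf.has_min
    {p | G.IsStarMap p} ⟨id, fun _ => rfl, fun _ h => absurd rfl h⟩
  have hsingleton : ∀ x, ¬ IsSingletonStar p x := by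
    intro x hx
    obtain ⟨y, hxy⟩ := h x
    obtain ⟨q, hq, hqp⟩ := hp.exists_fewer_singletonStars hx hxy
    refine hmin q hq (Finset.card_lt_card ((Finset.ssubset_iff_of_subset ?_).2 ?_))
    · intro z; simpa using fun hz => (hqp z hz).1
    · exact ⟨x, by simpa using hx, by simpa using fun hx' => (hqp x hx').2 rfl⟩
  refine ⟨p, hp, fun x => ?_⟩
  by_cases hpx : p x = x
  · obtain ⟨y, hy⟩ := not_forall.1 (hsingleton x)
    have hyx : y ≠ x := fun hyx => hy (by simp [hyx, hpx])
    exact ⟨y, hyx, by rw [hpx]; tauto⟩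
  · exact ⟨p x, hpx, hp.idem x⟩

section Weight

variable [Fintype V] [DecidableEq V]

/-- For a non-centre `c` nothing maps to `c`, and `0 - 1 = 0` in `ℕ` makes its weight vanish. -/
def starWeight (p : V → V) (c : V) : ℕ := min 2 (#{x | p x = c} - 1)

lemma one_le_starWeight {a b c : V} (hab : a ≠ b) (ha : p a = c) (hb : p b = c) :
    1 ≤ starWeight p c := by
  have : 1 < #{x | p x = c} := Finset.one_lt_card.2 ⟨a, by simpa, b, by simpa, hab⟩
  unfold starWeight; omega

lemma starWeight_eq_two {a b c d : V} (hab : a ≠ b) (hac : a ≠ c) (hbc : b ≠ c)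
    (ha : p a = d) (hb : p b = d) (hc : p c = d) : starWeight p d = 2 := by
  have : 2 < #{x | p x = d} :=
    Finset.two_lt_card.2 ⟨a, by simpa, b, by simpa, c, by simpa, hab, hac, hbc⟩
  unfold starWeight; omega

lemma three_mul_sum_starWeight_le (p : V → V) :
    3 * ∑ c, starWeight p c ≤ 2 * Fintype.card V := by
  calc 3 * ∑ c, starWeight p c = ∑ c, 3 * starWeight p c := Finset.mul_sum _ _ _
    _ ≤ ∑ c, 2 * #{x | p x = c} := Finset.sum_le_sum fun c _ => by unfold starWeight; omega
    _ = 2 * Fintype.card V := by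
      rw [← Finset.mul_sum, ← Finset.card_univ,
        Finset.card_eq_sum_card_fiberwise fun x _ => Finset.mem_univ (p x)]

theorem IsStarMap.isWRDF_starWeight (hp : G.IsStarMap p) (hstar : ∀ x, ∃ y ≠ x, p y = p x) :
    IsWRDF G (starWeight p) := by
  have hcentre : ∀ c, p c = c → 1 ≤ starWeight p c := fun c hc => by
    obtain ⟨y, hyc, hy⟩ := hstar c
    exact one_le_starWeight hyc (hy.trans hc) hc
  refine ⟨fun v => min_le_left _ _, fun v hv => ?_⟩
  have hpv : p v ≠ v := fun h => by have := hcentre v h; omega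
  set u := p v
  have hu : p u = u := hp.idem v
  have huv : u ≠ v := hpv
  refine ⟨u, hp.adj v hpv, hcentre u hu, fun w ⟨hw, hwnbr⟩ => ?_⟩
  set g := Function.update (Function.update (starWeight p) u (starWeight p u - 1)) v 1
  have hg : ∀ z, z ≠ v → z ≠ u → g z = starWeight p z := fun z hzv hzu => by simp [g, hzv, hzu]
  have hwv : w ≠ v := by rintro rfl; simp [g] at hw
  have hwu : w ≠ u := by rintro rfl; simpa [g] using hwnbr v (hp.adj v hpv).symm
  have hpw : p w ≠ w := fun h => by have := hcentre w h; rw [hg w hwv hwu] at hw; omega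
  have hcw : g (p w) = 0 := hwnbr (p w) (hp.adj w hpw)
  have hcv : p w ≠ v := fun h => by have := hp.idem w; rw [h] at this; exact hpv this
  by_cases hcu : p w = u
  · have := starWeight_eq_two huv hwu.symm hwv.symm hu rfl hcu
    simp [g, hcu, huv, this] at hcw
  · have := hcentre (p w) (hp.idem w)
    rw [hg (p w) hcv hcu] at hcw; omega

end Weight

end SimpleGraph

theorem stmt7 {V : Type*} [Fintype V] [DecidableEq V] (G : SimpleGraph V)
    (hconn : G.Connected) (hn : 2 ≤ Fintype.card V) :
    weakRomanNum G ≤ 2 * Fintype.card V / 3 := by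
  have : Nontrivial V := Fintype.one_lt_card_iff_nontrivial.mp hn
  obtain ⟨p, hp, hstar⟩ :=
    SimpleGraph.exists_isStarMap_forall_exists_ne hconn.preconnected.exists_adj_of_nontrivial
  have hweight := SimpleGraph.three_mul_sum_starWeight_le p
  calc weakRomanNum G ≤ ∑ v, SimpleGraph.starWeight p v :=
        Nat.sInf_le ⟨_, hp.isWRDF_starWeight hstar, rfl⟩
    _ ≤ 2 * Fintype.card V / 3 := by omega
end

section
/- For the corona graph G' ⊙ N_t of any graph G' with the empty graph on t vertices, γ_s(G' ⊙ N_t) = t·n(G'). -/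
open Finset

variable {V : Type*}

/-- The corona `G ⊙ N_t` of a graph `G` with the empty graph on `t` vertices:
each vertex `v` of `G` is joined to the `t` vertices of its own copy of `N_t`. -/
def corona (G : SimpleGraph V) (t : ℕ) : SimpleGraph (V ⊕ (V × Fin t)) :=
  SimpleGraph.fromRel (fun a b =>
    match a, b with
    | Sum.inl u, Sum.inl v => G.Adj u v
    | Sum.inl u, Sum.inr p => u = p.1
    | _, _ => False)

/-! A leaf `(v, i)` of the corona has `v` as its only neighbour. Hence a dominating set missing
the leaf must contain `v`, and a secure dominating set misses at most one leaf of each `v`: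
if `(v, i)` and `(v, j)` are both missing, swapping the guard on `v` onto `(v, i)` leaves
`(v, j)` undominated. Mapping each leaf to itself, or to its centre when it is missing, therefore
injects the `t * n` leaves into any secure dominating set, and the set of all leaves is a secure
dominating set of that size once `t ≥ 1`. -/

section Corona

variable {G : SimpleGraph V} {t : ℕ}

@[simp]
lemma corona_adj_inr_iff {w : V ⊕ V × Fin t} {v : V} {i : Fin t} :
    (corona G t).Adj w (Sum.inr (v, i)) ↔ w = Sum.inl v := by
  cases w <;> simp [corona]

lemma corona_adj_inl_inr (v : V) (i : Fin t) : (corona G t).Adj (Sum.inl v) (Sum.inr (v, i)) :=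
  corona_adj_inr_iff.mpr rfl

lemma Dominating.inl_mem_of_inr_notMem {T : Set (V ⊕ V × Fin t)} (hT : Dominating (corona G t) T)
    {v : V} {i : Fin t} (hvi : Sum.inr (v, i) ∉ T) : Sum.inl v ∈ T := by
  obtain ⟨u, huT, hu⟩ := hT _ hvi
  rwa [corona_adj_inr_iff.mp hu] at huT

lemma SecureDominating.eq_of_inr_notMem {T : Set (V ⊕ V × Fin t)}
    (hT : SecureDominating (corona G t) T) {v : V} {i j : Fin t}
    (hi : Sum.inr (v, i) ∉ T) (hj : Sum.inr (v, j) ∉ T) : i = j := by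
  obtain ⟨u, -, hu, hswap⟩ := hT.2 _ hi
  rw [corona_adj_inr_iff.mp hu] at hswap
  by_contra hij
  have hj' : Sum.inr (v, j) ∉ (T \ {Sum.inl v}) ∪ {Sum.inr (v, i)} := by
    rintro (⟨hjT, -⟩ | hji)
    · exact hj hjT
    · exact hij (by simpa [eq_comm] using hji)
  obtain ⟨w, hw, hwj⟩ := hswap _ hj'
  rw [corona_adj_inr_iff.mp hwj] at hw
  rcases hw with ⟨-, hne⟩ | hw
  · exact hne rfl
  · simp at hw

lemma SecureDominating.mul_card_le_ncard [Fintype V] {T : Set (V ⊕ V × Fin t)}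
    (hT : SecureDominating (corona G t) T) : t * Fintype.card V ≤ T.ncard := by
  classical
  let guard : V × Fin t → V ⊕ V × Fin t := fun p =>
    if Sum.inr p ∈ T then Sum.inr p else Sum.inl p.1
  have hguard : ∀ p ∈ Set.univ, guard p ∈ T := by
    rintro ⟨v, i⟩ -
    by_cases hvi : Sum.inr (v, i) ∈ T
    · simp [guard, hvi]
    · simpa [guard, hvi] using hT.1.inl_mem_of_inr_notMem hvi
  have hinj : Set.InjOn guard Set.univ := by
    rintro ⟨v, i⟩ - ⟨w, j⟩ - h
    by_cases hvi : Sum.inr (v, i) ∈ T <;> by_cases hwj : Sum.inr (w, j) ∈ T <;>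
      simp only [guard, hvi, hwj, if_true, if_false, Sum.inr.injEq, Sum.inl.injEq,
        reduceCtorEq] at h
    · exact h
    · subst h
      rw [hT.eq_of_inr_notMem hvi hwj]
  have := Set.ncard_le_ncard_of_injOn guard hguard hinj
  rwa [Set.ncard_univ, Nat.card_eq_fintype_card, Fintype.card_prod, Fintype.card_fin,
    mul_comm] at this

lemma secureDominating_corona_range_inr (ht : 0 < t) :
    SecureDominating (corona G t) (Set.range Sum.inr) := by
  let i₀ : Fin t := ⟨0, ht⟩
  have hcentre : ∀ x ∉ Set.range (Sum.inr : V × Fin t → V ⊕ V × Fin t), ∃ v, x = Sum.inl v := by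
    rintro (v | p) hx
    · exact ⟨v, rfl⟩
    · exact absurd ⟨p, rfl⟩ hx
  refine ⟨fun x hx => ?_, fun x hx => ?_⟩
  · obtain ⟨v, rfl⟩ := hcentre x hx
    exact ⟨_, ⟨(v, i₀), rfl⟩, (corona_adj_inl_inr v i₀).symm⟩
  · obtain ⟨v, rfl⟩ := hcentre x hx
    refine ⟨_, ⟨(v, i₀), rfl⟩, (corona_adj_inl_inr v i₀).symm, fun y hy => ?_⟩
    rcases y with w | ⟨w, j⟩
    · have hwv : w ≠ v := fun h => hy (Or.inr (by rw [h]; rfl))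
      refine ⟨Sum.inr (w, i₀), Or.inl ⟨⟨(w, i₀), rfl⟩, ?_⟩, (corona_adj_inl_inr w i₀).symm⟩
      simpa using hwv
    · have hwj : (w, j) = (v, i₀) := by
        by_contra hne
        exact hy (Or.inl ⟨⟨_, rfl⟩, by simpa using hne⟩)
      rw [hwj]
      exact ⟨Sum.inl v, Or.inr rfl, corona_adj_inl_inr v i₀⟩

lemma ncard_range_inr [Fintype V] :
    (Set.range (Sum.inr : V × Fin t → V ⊕ V × Fin t)).ncard = t * Fintype.card V := by
  rw [Set.ncard_range_of_injective Sum.inr_injective, Nat.card_eq_fintype_card,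
    Fintype.card_prod, Fintype.card_fin, mul_comm]

end Corona

theorem stmt9 {V : Type*} [Fintype V] (G : SimpleGraph V) (t : ℕ) (ht : 1 ≤ t) :
    secDomNum (corona G t) = t * Fintype.card V := by
  refine IsLeast.csInf_eq ⟨⟨_, secureDominating_corona_range_inr ht, ncard_range_inr⟩, ?_⟩
  rintro _ ⟨T, hT, rfl⟩
  exact hT.mul_card_le_ncard
end

section
/- If a graph G has no isolated vertices, then γ_s(G) ≤ n(G) − γ(G). -/
open Finset

variable {V : Type*}

/-!
If `ℓ` matches a set `D` injectively into its complement, then `(ℓ '' D)ᶜ` is secure dominating: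
the guard on `d` may move to `ℓ d`, and every other `ℓ d'` is still guarded by `d'`. Hence
`γ_s ≤ n - |D|`, and it suffices to find such a pairing with `D` dominating, so that `γ ≤ |D|`.
Take a pairing maximising the closed neighbourhood `N[D]`. A vertex `v` outside `N[D]` has a
neighbour `x`; if `x` is unmatched, add the edge `xv`; if `x = ℓ y` and `y` has an unmatched
neighbour `w`, augment along `w y x v`; otherwise move the root of the edge `yx` to `x`, which
keeps everything `y` dominated and adds `v`. Each move enlarges `N[D]`.
-/

open Function

lemma Dominating.domNum_le {G : SimpleGraph V} {S : Set V} (hS : Dominating G S) :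
    domNum G ≤ S.ncard :=
  Nat.sInf_le ⟨S, hS, rfl⟩

section Pairing

variable {G : SimpleGraph V} {D : Set V} {ℓ : V → V}

/-- A matching between `D` and its complement: `d ∈ D` is matched with `ℓ d`. -/
structure IsPairing (G : SimpleGraph V) (D : Set V) (ℓ : V → V) : Prop where
  adj : ∀ ⦃d⦄, d ∈ D → G.Adj d (ℓ d)
  mapsTo : Set.MapsTo ℓ D Dᶜ
  injOn : Set.InjOn ℓ D

lemma isPairing_empty (G : SimpleGraph V) (ℓ : V → V) : IsPairing G ∅ ℓ :=
  ⟨fun _ h => h.elim, Set.mapsTo_empty _ _, Set.injOn_empty _⟩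

lemma eqOn_update_of_notMem [DecidableEq V] {a : V} (b : V) (ha : a ∉ D) :
    Set.EqOn (update ℓ a b) ℓ D :=
  fun _ hd => update_of_ne (ne_of_mem_of_not_mem hd ha) _ _

lemma image_update_insert [DecidableEq V] {a : V} (b : V) (ha : a ∉ D) :
    update ℓ a b '' insert a D = insert b (ℓ '' D) := by
  rw [Set.image_insert_eq, update_self, (eqOn_update_of_notMem b ha).image_eq]

def closedNbhd (G : SimpleGraph V) (D : Set V) : Set V :=
  {v | v ∈ D ∨ ∃ d ∈ D, G.Adj d v}

lemma closedNbhd_mono {D' : Set V} (h : D ⊆ D') : closedNbhd G D ⊆ closedNbhd G D' :=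
  fun _ => Or.imp (@h _) fun ⟨d, hd, hdv⟩ => ⟨d, h hd, hdv⟩

namespace IsPairing

lemma notMem_image (h : IsPairing G D ℓ) {d : V} (hd : d ∈ D) : d ∉ ℓ '' D := by
  rintro ⟨d', hd', rfl⟩
  exact h.mapsTo hd' hd

lemma mono (h : IsPairing G D ℓ) {D' : Set V} (hD : D' ⊆ D) : IsPairing G D' ℓ :=
  ⟨fun _ hd => h.adj (hD hd), fun _ hd hd' => h.mapsTo (hD hd) (hD hd'), h.injOn.mono hD⟩

lemma insert_update [DecidableEq V] (h : IsPairing G D ℓ) {a b : V} (hab : G.Adj a b)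
    (ha : a ∉ D ∪ ℓ '' D) (hb : b ∉ D ∪ ℓ '' D) :
    IsPairing G (insert a D) (update ℓ a b) := by
  have hℓ := eqOn_update_of_notMem (ℓ := ℓ) b fun h => ha (.inl h)
  refine ⟨?_, ?_, ?_⟩
  · rintro d (rfl | hd)
    · simpa using hab
    · exact hℓ hd ▸ h.adj hd
  · rintro d (rfl | hd)
    · simpa [hab.ne'] using fun h => hb (.inl h)
    · rw [hℓ hd]
      rintro (had | had)
      exacts [ha (.inr ⟨d, hd, had⟩), h.mapsTo hd had]
  · rw [Set.injOn_insert fun h => ha (.inl h), hℓ.image_eq, update_self]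
    exact ⟨h.injOn.congr hℓ.symm, fun h => hb (.inr h)⟩

lemma secureDominating_compl_image (h : IsPairing G D ℓ) : SecureDominating G (ℓ '' D)ᶜ := by
  have hD : D ⊆ (ℓ '' D)ᶜ := fun _ hd => h.notMem_image hd
  refine ⟨?_, fun v hv => ?_⟩
  · intro v hv
    obtain ⟨d, hd, rfl⟩ := not_not.1 hv
    exact ⟨d, hD hd, h.adj hd⟩
  obtain ⟨d, hd, rfl⟩ := not_not.1 hv
  refine ⟨d, hD hd, h.adj hd, fun w hw => ?_⟩
  by_cases hwd : w = d
  · subst hwd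
    exact ⟨ℓ w, .inr rfl, (h.adj hd).symm⟩
  obtain ⟨d', hd', rfl⟩ : w ∈ ℓ '' D := by_contra fun h' => hw (.inl ⟨h', hwd⟩)
  have hd'd : d' ≠ d := by rintro rfl; exact hw (.inr rfl)
  exact ⟨d', .inl ⟨hD hd', hd'd⟩, h.adj hd'⟩

lemma secDomNum_le [Finite V] (h : IsPairing G D ℓ) : secDomNum G ≤ Nat.card V - D.ncard :=
  Nat.sInf_le ⟨_, h.secureDominating_compl_image, by rw [Set.ncard_compl, h.injOn.ncard_image]⟩

lemma apply_notMem_image_sdiff (h : IsPairing G D ℓ) {y : V} (hy : y ∈ D) :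
    ℓ y ∉ ℓ '' (D \ {y}) :=
  fun hx => ((h.injOn.mem_image_iff Set.sdiff_subset hy).1 hx).2 rfl

lemma swap [DecidableEq V] (h : IsPairing G D ℓ) {y : V} (hy : y ∈ D) :
    IsPairing G (insert (ℓ y) (D \ {y})) (update ℓ (ℓ y) y) := by
  refine (h.mono Set.sdiff_subset).insert_update (h.adj hy).symm ?_ ?_
  · rintro (hx | hx)
    · exact h.mapsTo hy hx.1
    · exact h.apply_notMem_image_sdiff hy hx
  · rintro (hy' | hy')
    · exact hy'.2 rfl
    · exact h.notMem_image hy (Set.image_mono Set.sdiff_subset hy')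

lemma augment [DecidableEq V] (h : IsPairing G D ℓ) {y w v : V} (hy : y ∈ D)
    (hyw : G.Adj y w) (hyv : G.Adj (ℓ y) v) (hw : w ∉ D ∪ ℓ '' D) (hv : v ∉ D ∪ ℓ '' D)
    (hwv : w ≠ v) :
    IsPairing G (insert (ℓ y) D) (update (update ℓ y w) (ℓ y) v) := by
  set D₀ := D \ {y}
  have hD₀ : insert y D₀ = D := by rw [Set.insert_sdiff_singleton, Set.insert_eq_of_mem hy]
  have hsub : D₀ ∪ ℓ '' D₀ ⊆ D ∪ ℓ '' D :=
    Set.union_subset_union Set.sdiff_subset (Set.image_mono Set.sdiff_subset)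
  have hyw' : IsPairing G (insert y D₀) (update ℓ y w) :=
    (h.mono Set.sdiff_subset).insert_update hyw
      (by
        rintro (hy' | hy')
        exacts [hy'.2 rfl, h.notMem_image hy (Set.image_mono Set.sdiff_subset hy')])
      fun hw' => hw (hsub hw')
  rw [← hD₀]
  refine hyw'.insert_update hyv ?_ ?_ <;>
    rw [image_update_insert _ fun hy' => hy'.2 rfl, hD₀] <;>
    simp only [Set.mem_union, Set.mem_insert_iff, not_or]
  · refine ⟨h.mapsTo hy, ?_, ?_⟩
    · rintro rfl
      exact hw (.inr ⟨y, hy, rfl⟩)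
    · exact h.apply_notMem_image_sdiff hy
  · exact ⟨fun hv' => hv (.inl hv'), hwv.symm,
      fun hv' => hv (.inr (Set.image_mono Set.sdiff_subset hv'))⟩

lemma closedNbhd_subset_swap (h : IsPairing G D ℓ) {y : V} (hy : y ∈ D)
    (hyN : ∀ w, G.Adj y w → w ∈ D ∪ ℓ '' D) :
    closedNbhd G D ⊆ closedNbhd G (insert (ℓ y) (D \ {y})) := by
  have hD : ∀ d ∈ D, d ≠ y → d ∈ insert (ℓ y) (D \ {y}) := fun d hd hdy => .inr ⟨hd, hdy⟩
  rintro u (hu | ⟨d, hd, hdu⟩)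
  · by_cases huy : u = y
    · subst huy
      exact .inr ⟨ℓ u, .inl rfl, (h.adj hu).symm⟩
    · exact .inl (hD u hu huy)
  by_cases hdy : d = y
  · subst hdy
    rcases hyN u hdu with hu | ⟨z, hz, rfl⟩
    · exact .inl (hD u hu hdu.ne')
    by_cases hzd : z = d
    · subst hzd
      exact .inl (.inl rfl)
    · exact .inr ⟨z, hD z hz hzd, h.adj hz⟩
  · exact .inr ⟨d, hD d hd hdy, hdu⟩

lemma exists_closedNbhd_ssubset (hG : ∀ v, ∃ u, G.Adj u v) (h : IsPairing G D ℓ)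
    (hD : ¬ Dominating G D) :
    ∃ D' ℓ', IsPairing G D' ℓ' ∧ closedNbhd G D ⊂ closedNbhd G D' := by
  classical
  simp only [Dominating, not_forall, not_exists, not_and] at hD
  obtain ⟨v, hvD, hvN⟩ := hD
  have hv : v ∉ closedNbhd G D := by rintro (hv | ⟨d, hd, hdv⟩); exacts [hvD hv, hvN d hd hdv]
  have hv' : v ∉ D ∪ ℓ '' D := by
    rintro (hv' | ⟨d, hd, rfl⟩)
    exacts [hvD hv', hvN d hd (h.adj hd)]
  obtain ⟨x, hxv⟩ := hG v
  suffices ∃ D' ℓ', IsPairing G D' ℓ' ∧ closedNbhd G D ⊆ closedNbhd G D' ∧ x ∈ D' by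
    obtain ⟨D', ℓ', hP, hsub, hx⟩ := this
    exact ⟨D', ℓ', hP, (Set.ssubset_iff_of_subset hsub).2 ⟨v, .inr ⟨x, hx, hxv⟩, hv⟩⟩
  by_cases hx : x ∈ ℓ '' D
  swap
  · refine ⟨_, _, h.insert_update hxv ?_ hv', closedNbhd_mono (Set.subset_insert _ _), .inl rfl⟩
    rintro (hxD | hxD)
    exacts [hvN x hxD hxv, hx hxD]
  obtain ⟨y, hy, rfl⟩ := hx
  by_cases hyN : ∀ w, G.Adj y w → w ∈ D ∪ ℓ '' D
  · exact ⟨_, _, h.swap hy, h.closedNbhd_subset_swap hy hyN, .inl rfl⟩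
  obtain ⟨w, hyw, hw⟩ : ∃ w, G.Adj y w ∧ w ∉ D ∪ ℓ '' D := by simpa using hyN
  have hwv : w ≠ v := by rintro rfl; exact hvN y hy hyw
  exact ⟨_, _, h.augment hy hyw hxv hw hv' hwv, closedNbhd_mono (Set.subset_insert _ _), .inl rfl⟩

end IsPairing

lemma exists_isPairing_dominating [Finite V] (hG : ∀ v, ∃ u, G.Adj u v) :
    ∃ D ℓ, IsPairing G D ℓ ∧ Dominating G D := by
  obtain ⟨⟨D, ℓ⟩, hP, hmax⟩ := Set.exists_max_image {p : Set V × (V → V) | IsPairing G p.1 p.2}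
    (fun p => (closedNbhd G p.1).ncard) (Set.toFinite _) ⟨(∅, id), isPairing_empty G id⟩
  refine ⟨D, ℓ, hP, by_contra fun hD => ?_⟩
  obtain ⟨D', ℓ', hP', hlt⟩ := hP.exists_closedNbhd_ssubset hG hD
  exact (hmax (D', ℓ') hP').not_gt (Set.ncard_lt_ncard hlt)

end Pairing

theorem stmt10 {V : Type*} [Fintype V] (G : SimpleGraph V)
    (h : ∀ v : V, ∃ u, G.Adj u v) :
    secDomNum G ≤ Fintype.card V - domNum G := by
  obtain ⟨D, ℓ, hP, hD⟩ := exists_isPairing_dominating h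
  calc secDomNum G ≤ Nat.card V - D.ncard := hP.secDomNum_le
    _ ≤ Fintype.card V - domNum G := by
      rw [Nat.card_eq_fintype_card]
      exact Nat.sub_le_sub_left hD.domNum_le _
end

section
/- If no component of G is a complete graph, then γ_r(G) ≤ ⌊(n(G) + γ(G) − τ(G))/2⌋. -/
open Finset

variable {V : Type*}

/-- The closed neighbourhood of a vertex. -/
def closedNbr (G : SimpleGraph V) (v : V) : Set V := insert v (G.neighborSet v)

/-- No connected component of `G` is a complete graph: every component contains
two distinct non-adjacent vertices. -/
def NoCompleteComponent (G : SimpleGraph V) : Prop :=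
  ∀ v : V, ∃ u w, G.Reachable v u ∧ G.Reachable v w ∧ u ≠ w ∧ ¬ G.Adj u w

/-- `T(S)`: the vertices outside `S` having a true twin in `S`. -/
def trueTwinSet (G : SimpleGraph V) (S : Set V) : Set V :=
  {v | v ∉ S ∧ ∃ s ∈ S, closedNbr G v = closedNbr G s}

/-- `τ(G)`: the maximum of `|T(S)|` over all minimum dominating sets `S`. -/
noncomputable def tauNum (G : SimpleGraph V) : ℕ :=
  sSup {n | ∃ S : Set V, Dominating G S ∧ S.ncard = domNum G ∧
    (trueTwinSet G S).ncard = n}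

/-!
Take a minimum dominating set `S` with `|T(S)| = τ(G)` and let `D` be the complement of
`S ∪ T(S)`, so `|D| = n − γ − τ`. Every `x ∈ S` has a neighbour in `D`. Indeed, a private
neighbour of `x` lying in `T(S)` is a twin of `x`; so if `x` has a neighbour in `S`, its private
neighbour (which exists by minimality) lies in `D`. If it has none, a neighbour of `x` in `T(S)` is
again a twin of `x`, and a neighbour that is not a twin exists as the component of `x` is not
complete.

`D` is secure: `x ∈ S` is defended by a private neighbour in `D` if it has one, and otherwise by
any neighbour `u ∈ D`, because a vertex `s ∈ S` outside `N[x]` whose only neighbour in `D` is `u`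
would make `S - {s, x} + u` a smaller dominating set. A vertex of `T(S)` is defended like its twin.
So `γ_r ≤ γ_s ≤ n − γ − τ`, and with `γ_r ≤ 2γ` this gives `2γ_r ≤ n + γ − τ`.
-/

variable {G : SimpleGraph V}

section ClosedNbr

lemma mem_closedNbr {v z : V} : z ∈ closedNbr G v ↔ z = v ∨ G.Adj v z := by
  simp [closedNbr]

lemma self_mem_closedNbr (v : V) : v ∈ closedNbr G v := mem_closedNbr.2 (Or.inl rfl)

lemma mem_closedNbr_of_adj {v z : V} (h : G.Adj v z) : z ∈ closedNbr G v :=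
  mem_closedNbr.2 (Or.inr h)

lemma mem_closedNbr_comm {v z : V} : z ∈ closedNbr G v ↔ v ∈ closedNbr G z := by
  simp only [mem_closedNbr, G.adj_comm, eq_comm]

lemma adj_of_mem_closedNbr {v z : V} (h : z ∈ closedNbr G v) (hne : z ≠ v) : G.Adj v z :=
  (mem_closedNbr.1 h).resolve_left hne

lemma NoCompleteComponent.exists_adj_closedNbr_ne (hnc : NoCompleteComponent G) (x : V) :
    ∃ w, G.Adj x w ∧ closedNbr G w ≠ closedNbr G x := by
  by_contra! htwin
  have hN : ∀ a ∈ closedNbr G x, closedNbr G a = closedNbr G x := by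
    intro a ha
    rcases mem_closedNbr.1 ha with rfl | hxa
    · rfl
    · exact htwin a hxa
  have hreach : ∀ y, G.Reachable x y → y ∈ closedNbr G x := by
    intro y hy
    rw [SimpleGraph.reachable_iff_reflTransGen] at hy
    induction hy with
    | refl => exact self_mem_closedNbr x
    | tail _ hbc ih => exact hN _ ih ▸ mem_closedNbr_of_adj hbc
  obtain ⟨u, w, hu, hw, hne, hnadj⟩ := hnc x
  have hwu : w ∈ closedNbr G u := hN u (hreach u hu) ▸ hreach w hw
  exact hnadj (adj_of_mem_closedNbr hwu hne.symm)

end ClosedNbr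

section Domination

variable {S : Set V} {x : V}

def IsMinDominating (G : SimpleGraph V) (S : Set V) : Prop :=
  Dominating G S ∧ ∀ S', Dominating G S' → S.ncard ≤ S'.ncard

def IsExtPrivateNbr (G : SimpleGraph V) (S : Set V) (x v : V) : Prop :=
  v ∉ S ∧ G.Adj x v ∧ ∀ s ∈ S, G.Adj s v → s = x

lemma IsMinDominating.not_dominating_of_ncard_lt (hS : IsMinDominating G S) {S' : Set V}
    (h : S'.ncard < S.ncard) : ¬ Dominating G S' :=
  fun hS' => (hS.2 S' hS').not_gt h

lemma Dominating.sdiff_singleton (hS : Dominating G S) (hxS : ∃ s ∈ S, G.Adj x s)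
    (hpriv : ∀ v, ¬ IsExtPrivateNbr G S x v) : Dominating G (S \ {x}) := by
  intro w hw
  by_cases hwx : w = x
  · subst hwx
    obtain ⟨s, hs, hws⟩ := hxS
    exact ⟨s, ⟨hs, (G.ne_of_adj hws).symm⟩, hws.symm⟩
  have hwS : w ∉ S := fun h => hw ⟨h, hwx⟩
  obtain ⟨s, hs, hsw⟩ := hS w hwS
  by_cases hsx : s = x
  · subst hsx
    obtain ⟨t, ht, htw, hts⟩ : ∃ t ∈ S, G.Adj t w ∧ t ≠ s := by
      simpa [IsExtPrivateNbr, hwS, hsw] using hpriv w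
    exact ⟨t, ⟨ht, hts⟩, htw⟩
  · exact ⟨s, ⟨hs, hsx⟩, hsw⟩

lemma IsMinDominating.exists_extPrivateNbr [Finite V] (hS : IsMinDominating G S) (hx : x ∈ S)
    (hxS : ∃ s ∈ S, G.Adj x s) : ∃ v, IsExtPrivateNbr G S x v := by
  by_contra! hpriv
  exact hS.not_dominating_of_ncard_lt (Set.ncard_sdiff_singleton_lt_of_mem hx)
    (hS.1.sdiff_singleton hxS hpriv)

end Domination

lemma Set.ncard_insert_sdiff_sdiff_lt {α : Type*} [Finite α] {S : Set α} {a b : α} (c : α)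
    (ha : a ∈ S) (hb : b ∈ S) (hab : a ≠ b) : (insert c ((S \ {a}) \ {b})).ncard < S.ncard :=
  calc (insert c ((S \ {a}) \ {b})).ncard ≤ ((S \ {a}) \ {b}).ncard + 1 := Set.ncard_insert_le _ _
    _ < (S \ {a}).ncard + 1 := by
      gcongr; exact Set.ncard_sdiff_singleton_lt_of_mem ⟨hb, hab.symm⟩
    _ ≤ S.ncard := Set.ncard_sdiff_singleton_lt_of_mem ha

section TrueTwins

variable {S : Set V} {x : V}

lemma exists_closedNbr_eq_of_mem_union_trueTwinSet {y : V} (hy : y ∈ S ∪ trueTwinSet G S) :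
    ∃ s ∈ S, closedNbr G y = closedNbr G s := by
  rcases hy with hyS | ⟨-, hy⟩
  · exact ⟨y, hyS, rfl⟩
  · exact hy

lemma IsExtPrivateNbr.closedNbr_eq_of_mem_trueTwinSet {v : V} (hv : IsExtPrivateNbr G S x v)
    (hvT : v ∈ trueTwinSet G S) : closedNbr G v = closedNbr G x := by
  obtain ⟨-, s, hs, hvs⟩ := hvT
  have hsv : G.Adj v s :=
    adj_of_mem_closedNbr (hvs ▸ self_mem_closedNbr s) (fun h => hv.1 (h ▸ hs))
  rwa [← hv.2.2 s hs hsv.symm]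

lemma IsMinDominating.exists_adj_notMem_union_trueTwinSet [Finite V]
    (hnc : NoCompleteComponent G) (hS : IsMinDominating G S) (hx : x ∈ S) :
    ∃ d ∉ S ∪ trueTwinSet G S, G.Adj x d := by
  have of_adj_mem : (∃ s ∈ S, G.Adj x s) → ∃ d ∉ S ∪ trueTwinSet G S, G.Adj x d := by
    rintro ⟨s, hs, hxs⟩
    obtain ⟨v, hv⟩ := hS.exists_extPrivateNbr hx ⟨s, hs, hxs⟩
    refine ⟨v, ?_, hv.2.1⟩
    rintro (hvS | hvT)
    · exact hv.1 hvS
    · -- a private neighbour that is a twin of `x` would be adjacent to the `S`-neighbour `s`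
      have hsv : s ∈ closedNbr G v :=
        hv.closedNbr_eq_of_mem_trueTwinSet hvT ▸ mem_closedNbr_of_adj hxs
      have hvs := adj_of_mem_closedNbr hsv (fun h => hv.1 (h ▸ hs))
      exact G.ne_of_adj hxs (hv.2.2 s hs hvs.symm).symm
  obtain ⟨w, hxw, hwx⟩ := hnc.exists_adj_closedNbr_ne x
  by_cases hw : w ∈ S ∪ trueTwinSet G S
  · apply of_adj_mem
    obtain ⟨s, hs, hws⟩ := exists_closedNbr_eq_of_mem_union_trueTwinSet hw
    have hxs : x ≠ s := by rintro rfl; exact hwx hws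
    exact ⟨s, hs, (adj_of_mem_closedNbr (hws ▸ mem_closedNbr_of_adj hxw.symm) hxs).symm⟩
  · exact ⟨w, hw, hxw⟩

end TrueTwins

section SecureDomination

variable {S : Set V} {x : V}

lemma Dominating.insert_sdiff_sdiff {s u : V} (hS : Dominating G S) (hxu : G.Adj x u)
    (hsu : G.Adj s u) (hpriv : ∀ v ∉ S ∪ trueTwinSet G S, ¬ IsExtPrivateNbr G S x v)
    (honly : ∀ d ∉ S ∪ trueTwinSet G S, G.Adj s d → d = u) :
    Dominating G (insert u ((S \ {s}) \ {x})) := by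
  intro w hw
  have hwu : w ≠ u := fun h => hw (h ▸ Set.mem_insert w _)
  by_cases hwx : w = x
  · exact ⟨u, Set.mem_insert u _, hwx ▸ hxu.symm⟩
  by_cases hws : w = s
  · exact ⟨u, Set.mem_insert u _, hws ▸ hsu.symm⟩
  have hwS : w ∉ S := fun h => hw (Set.mem_insert_of_mem _ ⟨⟨h, hws⟩, hwx⟩)
  by_cases hother : ∃ t ∈ S, G.Adj t w ∧ t ≠ s ∧ t ≠ x
  · obtain ⟨t, ht, htw, hts, htx⟩ := hother
    exact ⟨t, Set.mem_insert_of_mem _ ⟨⟨ht, hts⟩, htx⟩, htw⟩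
  push Not at hother
  refine ⟨u, Set.mem_insert u _, ?_⟩
  by_cases hwT : w ∈ trueTwinSet G S
  · -- the twin of `w` in `S` is `s` or `x`, both adjacent to `u`
    obtain ⟨-, t, ht, hwt⟩ := hwT
    have htw : G.Adj t w := (adj_of_mem_closedNbr (hwt ▸ self_mem_closedNbr t)
      (fun h : t = w => hwS (h ▸ ht))).symm
    have htu : G.Adj t u := by
      by_cases hts : t = s
      · exact hts ▸ hsu
      · exact hother t ht htw hts ▸ hxu
    exact (adj_of_mem_closedNbr (hwt ▸ mem_closedNbr_of_adj htu) hwu.symm).symm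
  · have hwD : w ∉ S ∪ trueTwinSet G S := fun h => h.elim hwS hwT
    have hsw : ¬ G.Adj s w := fun h => hwu (honly w hwD h)
    have hxw : ∀ t ∈ S, G.Adj t w → t = x := fun t ht htw =>
      hother t ht htw (fun h => hsw (h ▸ htw))
    obtain ⟨t, ht, htw⟩ := hS w hwS
    exact absurd ⟨hwS, hxw t ht htw ▸ htw, hxw⟩ (hpriv w hwD)

lemma IsMinDominating.exists_defender [Finite V] (hnc : NoCompleteComponent G)
    (hS : IsMinDominating G S) (hx : x ∈ S) :
    ∃ u ∉ S ∪ trueTwinSet G S, u ∈ closedNbr G x ∧ ∀ s ∈ S, x ∉ closedNbr G s →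
      ∃ d ∉ S ∪ trueTwinSet G S, d ≠ u ∧ d ∈ closedNbr G s := by
  have hnbr := fun {y} (hy : y ∈ S) => hS.exists_adj_notMem_union_trueTwinSet hnc hy
  by_cases hpriv : ∃ v ∉ S ∪ trueTwinSet G S, IsExtPrivateNbr G S x v
  · obtain ⟨v, hvD, hv⟩ := hpriv
    refine ⟨v, hvD, mem_closedNbr_of_adj hv.2.1, fun s hs hxs => ?_⟩
    obtain ⟨d, hdD, hsd⟩ := hnbr hs
    refine ⟨d, hdD, ?_, mem_closedNbr_of_adj hsd⟩
    rintro rfl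
    exact hxs (hv.2.2 s hs hsd ▸ self_mem_closedNbr s)
  · push Not at hpriv
    obtain ⟨u, huD, hxu⟩ := hnbr hx
    refine ⟨u, huD, mem_closedNbr_of_adj hxu, fun s hs hxs => ?_⟩
    by_contra! honly
    have hxs' : x ≠ s := by rintro rfl; exact hxs (self_mem_closedNbr x)
    have honly' : ∀ d ∉ S ∪ trueTwinSet G S, G.Adj s d → d = u :=
      fun d hd hsd => by_contra fun hdu => honly d hd hdu (mem_closedNbr_of_adj hsd)
    obtain ⟨d, hdD, hsd⟩ := hnbr hs
    exact hS.not_dominating_of_ncard_lt (Set.ncard_insert_sdiff_sdiff_lt u hs hx hxs'.symm)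
      (hS.1.insert_sdiff_sdiff hxu (honly' d hdD hsd ▸ hsd) hpriv honly')

lemma secureDominating_of_forall_exists {D : Set V}
    (h : ∀ x ∉ D, ∃ u ∈ D, u ∈ closedNbr G x ∧
      ∀ y ∉ D, x ∉ closedNbr G y → ∃ d ∈ D, d ≠ u ∧ d ∈ closedNbr G y) :
    SecureDominating G D := by
  have adj_of_mem {x u : V} (hx : x ∉ D) (hu : u ∈ D) (hux : u ∈ closedNbr G x) : G.Adj u x :=
    (adj_of_mem_closedNbr hux (fun h => hx (h ▸ hu))).symm
  refine ⟨fun x hx => ?_, fun x hx => ?_⟩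
  · obtain ⟨u, hu, hux, -⟩ := h x hx
    exact ⟨u, hu, adj_of_mem hx hu hux⟩
  obtain ⟨u, hu, hux, hdef⟩ := h x hx
  refine ⟨u, hu, adj_of_mem hx hu hux, fun w hw => ?_⟩
  by_cases hwu : w = u
  · exact ⟨x, Or.inr rfl, hwu ▸ adj_of_mem hx hu hux |>.symm⟩
  have hwD : w ∉ D := fun h => hw (Or.inl ⟨h, hwu⟩)
  by_cases hxw : x ∈ closedNbr G w
  · exact ⟨x, Or.inr rfl, (adj_of_mem_closedNbr hxw (fun h => hw (Or.inr h.symm))).symm⟩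
  obtain ⟨d, hd, hdu, hdw⟩ := hdef w hwD hxw
  exact ⟨d, Or.inl ⟨hd, hdu⟩, adj_of_mem hwD hd hdw⟩

lemma IsMinDominating.secureDominating_compl_union_trueTwinSet [Finite V] {S : Set V}
    (hnc : NoCompleteComponent G) (hS : IsMinDominating G S) :
    SecureDominating G (S ∪ trueTwinSet G S)ᶜ := by
  refine secureDominating_of_forall_exists fun x hx => ?_
  rw [Set.notMem_compl_iff] at hx
  obtain ⟨x', hx', hxx'⟩ := exists_closedNbr_eq_of_mem_union_trueTwinSet hx
  obtain ⟨u, hu, hux', hdef⟩ := hS.exists_defender hnc hx'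
  refine ⟨u, hu, hxx' ▸ hux', fun y hy hxy => ?_⟩
  rw [Set.notMem_compl_iff] at hy
  obtain ⟨y', hy', hyy'⟩ := exists_closedNbr_eq_of_mem_union_trueTwinSet hy
  have hx'y' : x' ∉ closedNbr G y' := by
    rwa [mem_closedNbr_comm, ← hxx', mem_closedNbr_comm, ← hyy']
  obtain ⟨d, hd, hdu, hdy'⟩ := hdef y' hy' hx'y'
  exact ⟨d, hd, hdu, hyy' ▸ hdy'⟩

end SecureDomination

section WeakRoman

lemma not_undefended_of_dominating {f : V → ℕ} {A : Set V} (hA : Dominating G A)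
    (hf : ∀ a ∈ A, f a ≠ 0) (w : V) : ¬ Undefended G f w := by
  rintro ⟨hw, hnbr⟩
  obtain ⟨a, ha, haw⟩ := hA w (fun h => hf w h hw)
  exact hf a ha (hnbr a haw)

lemma sum_ite_mem_eq_mul_ncard [Fintype V] (A : Set V) [DecidablePred (· ∈ A)] (c : ℕ) :
    ∑ v, (if v ∈ A then c else 0) = c * A.ncard := by
  simp [Finset.sum_ite, Set.ncard_eq_toFinset_card', mul_comm]

variable [Fintype V] [DecidableEq V]

lemma weakRomanNum_le_sum {f : V → ℕ} (hf : IsWRDF G f) : weakRomanNum G ≤ ∑ v, f v :=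
  Nat.sInf_le ⟨f, hf, rfl⟩

lemma weakRomanNum_le_ncard_of_secureDominating {A : Set V} (hA : SecureDominating G A) :
    weakRomanNum G ≤ A.ncard := by
  classical
  let f : V → ℕ := fun v => if v ∈ A then 1 else 0
  have hf : IsWRDF G f := by
    refine ⟨fun v => by dsimp only [f]; split_ifs <;> omega, fun v hv => ?_⟩
    have hvA : v ∉ A := by simpa [f] using hv
    obtain ⟨u, hu, huv, hdom⟩ := hA.2 v hvA
    refine ⟨u, huv, by simp [f, hu], not_undefended_of_dominating hdom ?_⟩
    rintro a (⟨haA, hau⟩ | rfl)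
    · simp_all [f, Function.update_apply]
    · simp
  simpa only [f, sum_ite_mem_eq_mul_ncard, one_mul] using weakRomanNum_le_sum hf

lemma weakRomanNum_le_two_mul_ncard_of_dominating {S : Set V} (hS : Dominating G S) :
    weakRomanNum G ≤ 2 * S.ncard := by
  classical
  let f : V → ℕ := fun v => if v ∈ S then 2 else 0
  have hf : IsWRDF G f := by
    refine ⟨fun v => by dsimp only [f]; split_ifs <;> omega, fun v hv => ?_⟩
    have hvS : v ∉ S := by simpa [f] using hv
    obtain ⟨u, hu, huv⟩ := hS v hvS
    refine ⟨u, huv, by simp [f, hu], not_undefended_of_dominating hS fun a ha => ?_⟩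
    have hav : a ≠ v := fun h => hvS (h ▸ ha)
    by_cases hau : a = u <;> simp [f, hav, hau, ha, hu, G.ne_of_adj huv]
  simpa only [f, sum_ite_mem_eq_mul_ncard] using weakRomanNum_le_sum hf

end WeakRoman

lemma ncard_compl_union_trueTwinSet_add [Finite V] (S : Set V) :
    (S ∪ trueTwinSet G S)ᶜ.ncard + S.ncard + (trueTwinSet G S).ncard = Nat.card V := by
  rw [add_assoc, ← Set.ncard_union_eq (Set.disjoint_left.2 fun _ hS hT => hT.1 hS), add_comm,
    Set.ncard_add_ncard_compl]

lemma exists_isMinDominating_ncard_trueTwinSet_eq_tauNum [Finite V] (G : SimpleGraph V) :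
    ∃ S, IsMinDominating G S ∧ S.ncard = domNum G ∧ (trueTwinSet G S).ncard = tauNum G := by
  obtain ⟨S₀, hS₀, hS₀card⟩ : ∃ S : Set V, Dominating G S ∧ S.ncard = domNum G :=
    Nat.sInf_mem (s := {n | ∃ S : Set V, Dominating G S ∧ S.ncard = n})
      ⟨_, Set.univ, fun v hv => (hv (Set.mem_univ v)).elim, rfl⟩
  obtain ⟨S, hS, hScard, hST⟩ : ∃ S : Set V, Dominating G S ∧ S.ncard = domNum G ∧
      (trueTwinSet G S).ncard = tauNum G :=
    Nat.sSup_mem (s := {n | ∃ S : Set V, Dominating G S ∧ S.ncard = domNum G ∧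
      (trueTwinSet G S).ncard = n}) ⟨_, S₀, hS₀, hS₀card, rfl⟩
      ⟨Nat.card V, by rintro n ⟨S, -, -, rfl⟩; exact Set.ncard_le_card _⟩
  exact ⟨S, ⟨hS, fun S' hS' => hScard ▸ Nat.sInf_le ⟨S', hS', rfl⟩⟩, hScard, hST⟩

theorem stmt14 {V : Type*} [Fintype V] [DecidableEq V] (G : SimpleGraph V)
    (hnc : NoCompleteComponent G) :
    weakRomanNum G ≤ (Fintype.card V + domNum G - tauNum G) / 2 := by
  obtain ⟨S, hS, hScard, hST⟩ := exists_isMinDominating_ncard_trueTwinSet_eq_tauNum G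
  have hsec := weakRomanNum_le_ncard_of_secureDominating
    (hS.secureDominating_compl_union_trueTwinSet hnc)
  have hdom := weakRomanNum_le_two_mul_ncard_of_dominating hS.1
  have hcount := ncard_compl_union_trueTwinSet_add (G := G) S
  rw [Nat.card_eq_fintype_card] at hcount
  omega
end

section
/- For any graph G, γ_s(G) ≤ θ(G), the clique covering number of G. -/
open Finset

variable {V : Type*}

/-- The clique covering number `θ(G)`: the minimum number of cliques needed to
cover the vertex set of `G`. -/
noncomputable def cliqueCoverNum (G : SimpleGraph V) : ℕ :=
  sInf {n | ∃ F : Fin n → Set V, (∀ i, G.IsClique (F i)) ∧ ∀ v, ∃ i, v ∈ F i}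

/- Pick one vertex from each clique of a minimum clique cover. Every vertex outside this set
is adjacent to the representative of its clique, and swapping the two yields again a set of
representatives, hence a dominating set. -/

section CliqueClasses

variable {ι : Type*} (G : SimpleGraph V) {c : V → ι} {S : Set V}

theorem dominating_of_forall_exists_mem_eq (hc : ∀ x y, c x = c y → x ≠ y → G.Adj x y)
    (hS : ∀ v, ∃ s ∈ S, c s = c v) : Dominating G S := by
  intro v hv
  obtain ⟨s, hsS, hsv⟩ := hS v
  exact ⟨s, hsS, hc s v hsv fun h => hv (h ▸ hsS)⟩

theorem forall_exists_mem_diff_union_eq (hS : ∀ v, ∃ s ∈ S, c s = c v) {u v : V}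
    (huv : c u = c v) (w : V) : ∃ s ∈ (S \ {u}) ∪ {v}, c s = c w := by
  by_cases hvw : c v = c w
  · exact ⟨v, Or.inr rfl, hvw⟩
  · obtain ⟨s, hsS, hsw⟩ := hS w
    refine ⟨s, Or.inl ⟨hsS, ?_⟩, hsw⟩
    rintro rfl
    exact hvw (huv ▸ hsw)

theorem secureDominating_of_forall_exists_mem_eq (hc : ∀ x y, c x = c y → x ≠ y → G.Adj x y)
    (hS : ∀ v, ∃ s ∈ S, c s = c v) : SecureDominating G S := by
  refine ⟨dominating_of_forall_exists_mem_eq G hc hS, fun v hv => ?_⟩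
  obtain ⟨u, huS, huv⟩ := hS v
  exact ⟨u, huS, hc u v huv fun h => hv (h ▸ huS),
    dominating_of_forall_exists_mem_eq G hc (forall_exists_mem_diff_union_eq hS huv)⟩

end CliqueClasses

theorem secDomNum_le_of_isClique_cover {ι : Type*} [Finite ι] (G : SimpleGraph V)
    (F : ι → Set V) (hF : ∀ i, G.IsClique (F i)) (hcov : ∀ v, ∃ i, v ∈ F i) :
    secDomNum G ≤ Nat.card ι := by
  choose c hc using hcov
  have hcliq : ∀ x y, c x = c y → x ≠ y → G.Adj x y := fun x y hxy =>
    hF (c y) (hxy ▸ hc x) (hc y)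
  choose r hr using fun i : Set.range c => i.2
  have hS : ∀ v, ∃ s ∈ Set.range r, c s = c v := fun v => ⟨_, ⟨⟨c v, v, rfl⟩, rfl⟩, hr _⟩
  have hr_inj : Function.Injective r := fun i j hij => Subtype.ext (by rw [← hr i, ← hr j, hij])
  calc secDomNum G ≤ (Set.range r).ncard :=
        Nat.sInf_le ⟨_, secureDominating_of_forall_exists_mem_eq G hcliq hS, rfl⟩
    _ = (Set.range c).ncard := by rw [Set.ncard_range_of_injective hr_inj, Nat.card_coe_set_eq]
    _ ≤ Nat.card ι := Set.ncard_le_card _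

theorem exists_isClique_cover_fin_cliqueCoverNum [Finite V] (G : SimpleGraph V) :
    ∃ F : Fin (cliqueCoverNum G) → Set V, (∀ i, G.IsClique (F i)) ∧ ∀ v, ∃ i, v ∈ F i := by
  let e := Finite.equivFin V
  have hsingletons : ∃ F : Fin (Nat.card V) → Set V, (∀ i, G.IsClique (F i)) ∧ ∀ v, ∃ i, v ∈ F i :=
    ⟨fun i => {e.symm i}, fun i => Set.pairwise_singleton _ _, fun v => ⟨e v, by simp⟩⟩
  exact Nat.sInf_mem
    (s := {n | ∃ F : Fin n → Set V, (∀ i, G.IsClique (F i)) ∧ ∀ v, ∃ i, v ∈ F i}) ⟨_, hsingletons⟩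

theorem stmt15 {V : Type*} [Fintype V] (G : SimpleGraph V) :
    secDomNum G ≤ cliqueCoverNum G := by
  obtain ⟨F, hF, hcov⟩ := exists_isClique_cover_fin_cliqueCoverNum G
  simpa using secDomNum_le_of_isClique_cover G F hF hcov
end

section
/- For any graph G, γ_s(G) + γ_s(Ḡ) ≤ n(G) + 1 and γ_s(G)·γ_s(Ḡ) ≤ (n(G)+1)²/4, where Ḡ is the complement of G. -/
open Finset

variable {V : Type*}

/-!
Split `V` into cliques of `G`, i.e. colour `Gᶜ` properly, and keep one representative per
clique. This is a secure dominating set of `G`: a vertex `v` outside it swaps with the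
representative of its own clique, after which every other vertex is still adjacent to `v` or to
the representative of its clique. Hence `γ_s(G) ≤ χ(Gᶜ)` and `γ_s(Gᶜ) ≤ χ(G)`, and both bounds
follow from the Nordhaus–Gaddum inequality `χ(G) + χ(Gᶜ) ≤ n + 1` (and AM–GM for the product).
That inequality is proved by adding vertices one at a time: a new vertex needs a fresh colour
in both graphs only if its neighbourhoods in `G` and `Gᶜ` each meet every existing colour class.
-/

namespace SimpleGraph

section CliquePartition

variable {α : Type*} {G : SimpleGraph V} (C : Gᶜ.Coloring α)

theorem Coloring.adj_of_compl_of_eq {u v : V} (huv : u ≠ v) (h : C u = C v) : G.Adj u v := by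
  by_contra hG
  exact C.valid ((G.compl_adj u v).2 ⟨huv, hG⟩) h

noncomputable def Coloring.classRep (v : V) : V :=
  Set.rangeSplitting C (Set.rangeFactorization C v)

theorem Coloring.classRep_mem (v : V) : C.classRep v ∈ Set.range (Set.rangeSplitting C) :=
  Set.mem_range_self _

theorem Coloring.color_classRep (v : V) : C (C.classRep v) = C v :=
  Set.apply_rangeSplitting C _

theorem Coloring.adj_classRep {v : V} (hv : v ∉ Set.range (Set.rangeSplitting C)) :
    G.Adj (C.classRep v) v :=
  C.adj_of_compl_of_eq (fun h => hv (h ▸ C.classRep_mem v)) (C.color_classRep v)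

theorem Coloring.secureDominating_range_rangeSplitting :
    SecureDominating G (Set.range (Set.rangeSplitting C)) := by
  set S := Set.range (Set.rangeSplitting C)
  have secure : ∀ v ∉ S, ∃ u ∈ S, G.Adj u v ∧ Dominating G ((S \ {u}) ∪ {v}) := by
    intro v hv
    refine ⟨C.classRep v, C.classRep_mem v, C.adj_classRep hv, fun w hw => ?_⟩
    simp only [Set.mem_union, Set.mem_sdiff, Set.mem_singleton_iff, not_or, not_and_not_right] at hw
    obtain ⟨hwS, hwv⟩ := hw
    by_cases hcol : C w = C v
    · exact ⟨v, Or.inr rfl, C.adj_of_compl_of_eq (Ne.symm hwv) hcol.symm⟩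
    · have hwS : w ∉ S := fun h => hcol (by rw [hwS h, C.color_classRep])
      refine ⟨C.classRep w, Or.inl ⟨C.classRep_mem w, fun h => hcol ?_⟩, C.adj_classRep hwS⟩
      rw [← C.color_classRep w, h, C.color_classRep]
  exact ⟨fun v hv => (secure v hv).imp fun _ ⟨hu, hadj, _⟩ => ⟨hu, hadj⟩, secure⟩

end CliquePartition

theorem secDomNum_le_ncard {G : SimpleGraph V} {S : Set V} (h : SecureDominating G S) :
    secDomNum G ≤ S.ncard :=
  Nat.sInf_le ⟨S, h, rfl⟩

theorem secDomNum_le_of_colorable_compl {G : SimpleGraph V} {k : ℕ} (h : Gᶜ.Colorable k) :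
    secDomNum G ≤ k := by
  obtain ⟨C⟩ := h
  refine (secDomNum_le_ncard C.secureDominating_range_rangeSplitting).trans ?_
  rw [Set.ncard_range_of_injective (Set.rangeSplitting_injective C)]
  exact (Finite.card_subtype_le (· ∈ Set.range C)).trans_eq (Nat.card_fin k)

section NordhausGaddum

variable {α : Type*} {G H : SimpleGraph V} {s : Finset V} {a : V}

def IsColoringOn (G : SimpleGraph V) (s : Finset V) (c : V → α) : Prop :=
  ∀ u ∈ s, ∀ v ∈ s, G.Adj u v → c u ≠ c v

theorem IsColoringOn.insert_update [DecidableEq V] {c : V → α} (hc : G.IsColoringOn s c)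
    (ha : a ∉ s) {i : α} (hi : ∀ v ∈ s, G.Adj a v → c v ≠ i) :
    G.IsColoringOn (insert a s) (Function.update c a i) := by
  have hs : ∀ w ∈ s, Function.update c a i w = c w := fun w hw =>
    Function.update_of_ne (ne_of_mem_of_not_mem hw ha) _ _
  intro u hu v hv huv
  rcases mem_insert.1 hu with rfl | hus <;> rcases mem_insert.1 hv with rfl | hvs
  · exact absurd rfl (G.ne_of_adj huv)
  · rw [Function.update_self, hs v hvs]
    exact (hi v hvs huv).symm
  · rw [Function.update_self, hs u hus]
    exact hi u hus huv.symm
  · rw [hs u hus, hs v hvs]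
    exact hc u hus v hvs huv

theorem image_insert_update [DecidableEq V] [DecidableEq α] (ha : a ∉ s) (c : V → α) (i : α) :
    (insert a s).image (Function.update c a i) = insert i (s.image c) := by
  rw [image_insert, Function.update_self,
    image_congr fun w hw => Function.update_of_ne (ne_of_mem_of_not_mem hw ha) _ _]

theorem exists_free_color_or_card_image_le [DecidableEq α] [DecidableRel G.Adj] (c : V → α)
    (a : V) :
    (∃ i ∈ s.image c, ∀ v ∈ s, G.Adj a v → c v ≠ i) ∨ #(s.image c) ≤ #{v ∈ s | G.Adj a v} := by
  refine or_iff_not_imp_left.2 fun h => ?_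
  push Not at h
  calc #(s.image c) ≤ #({v ∈ s | G.Adj a v}.image c) := by
        refine card_le_card fun i hi => ?_
        obtain ⟨v, hv, hav, rfl⟩ := h i hi
        exact mem_image_of_mem c (mem_filter.2 ⟨hv, hav⟩)
    _ ≤ #{v ∈ s | G.Adj a v} := card_image_le

theorem IsColoringOn.exists_insert [DecidableEq V] [DecidableEq α] [Infinite α]
    [DecidableRel G.Adj] {c : V → α} (hc : G.IsColoringOn s c) (ha : a ∉ s) :
    ∃ c' : V → α, G.IsColoringOn (insert a s) c' ∧ #((insert a s).image c') ≤ #(s.image c) + 1 ∧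
      (#((insert a s).image c') ≤ #(s.image c) ∨ #(s.image c) ≤ #{v ∈ s | G.Adj a v}) := by
  obtain ⟨i, hi, hfree⟩ | hcard := exists_free_color_or_card_image_le (G := G) (s := s) c a
  · refine ⟨_, hc.insert_update ha hfree, ?_⟩
    rw [image_insert_update ha, insert_eq_of_mem hi]
    omega
  · obtain ⟨i, hi⟩ := Infinite.exists_notMem_finset (s.image c)
    have hfree : ∀ v ∈ s, G.Adj a v → c v ≠ i := fun v hv _ h =>
      hi (h ▸ mem_image_of_mem c hv)
    refine ⟨_, hc.insert_update ha hfree, ?_, Or.inr hcard⟩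
    rw [image_insert_update ha]
    exact card_insert_le _ _

theorem IsColoringOn.colorable [Fintype V] [DecidableEq α] {c : V → α}
    (hc : G.IsColoringOn univ c) :
    G.Colorable #(univ.image c) := by
  let C : G.Coloring (univ.image c) :=
    Coloring.mk (fun v => ⟨c v, mem_image_of_mem c (mem_univ v)⟩)
      fun {v w} huv h => hc v (mem_univ v) w (mem_univ w) huv (congrArg Subtype.val h)
  simpa using C.colorable

theorem exists_isColoringOn_add_card_image_le [DecidableEq V] [DecidableRel G.Adj]
    [DecidableRel H.Adj] (hGH : Disjoint G H) (s : Finset V) :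
    ∃ c d : V → ℕ, G.IsColoringOn s c ∧ H.IsColoringOn s d ∧
      #(s.image c) + #(s.image d) ≤ #s + 1 := by
  induction s using Finset.induction_on with
  | empty => exact ⟨fun _ => 0, fun _ => 0, by simp [IsColoringOn], by simp [IsColoringOn], by simp⟩
  | @insert a s ha ih =>
    obtain ⟨c, d, hc, hd, hsum⟩ := ih
    obtain ⟨c', hc', hc'1, hc'2⟩ := hc.exists_insert ha
    obtain ⟨d', hd', hd'1, hd'2⟩ := hd.exists_insert ha
    have hnbrs : #{v ∈ s | G.Adj a v} + #{v ∈ s | H.Adj a v} ≤ #s := by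
      rw [← card_union_of_disjoint (disjoint_filter.2 fun v _ => disjoint_left.1 hGH a v)]
      exact card_le_card (union_subset (filter_subset _ _) (filter_subset _ _))
    refine ⟨c', d', hc', hd', ?_⟩
    rw [card_insert_of_notMem ha]
    omega

theorem exists_colorable_add_le_card_add_one [Fintype V] (hGH : Disjoint G H) :
    ∃ k l, G.Colorable k ∧ H.Colorable l ∧ k + l ≤ Fintype.card V + 1 := by
  classical
  obtain ⟨c, d, hc, hd, hsum⟩ := exists_isColoringOn_add_card_image_le hGH univ
  exact ⟨_, _, hc.colorable, hd.colorable, hsum⟩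

end NordhausGaddum

end SimpleGraph

theorem stmt16 {V : Type*} [Fintype V] (G : SimpleGraph V) :
    secDomNum G + secDomNum Gᶜ ≤ Fintype.card V + 1 ∧
      ((secDomNum G * secDomNum Gᶜ : ℚ)) ≤ ((Fintype.card V : ℚ) + 1) ^ 2 / 4 := by
  obtain ⟨k, l, hk, hl, hkl⟩ :=
    SimpleGraph.exists_colorable_add_le_card_add_one (G := Gᶜ) (H := G) disjoint_compl_left
  have hG : secDomNum G ≤ k := SimpleGraph.secDomNum_le_of_colorable_compl hk
  have hGc : secDomNum Gᶜ ≤ l :=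
    SimpleGraph.secDomNum_le_of_colorable_compl (by rwa [compl_compl])
  have hsum : secDomNum G + secDomNum Gᶜ ≤ Fintype.card V + 1 := by omega
  refine ⟨hsum, ?_⟩
  have hsum' : (secDomNum G + secDomNum Gᶜ : ℚ) ≤ Fintype.card V + 1 := by exact_mod_cast hsum
  calc (secDomNum G * secDomNum Gᶜ : ℚ) ≤ (secDomNum G + secDomNum Gᶜ : ℚ) ^ 2 / 4 := by
        linarith [four_mul_le_sq_add (secDomNum G : ℚ) (secDomNum Gᶜ)]
    _ ≤ ((Fintype.card V : ℚ) + 1) ^ 2 / 4 := by gcongr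
end

section
/- For integers t ≥ 2 and t' ≥ 2, γ_s(K_t □ K_{1,t'-1}) = t', where K_{1,t'-1} is the star with t'−1 leaves. -/
open Finset

variable {V : Type*}

/-- The star `K_{1,t-1}` on `t` vertices: vertex `0` is adjacent to all others. -/
def starGraph (t : ℕ) : SimpleGraph (Fin t) :=
  SimpleGraph.fromRel (fun a _ => (a : ℕ) = 0)

/-! Each column `Fin t × {j}` is a clique, so the row `{0} × Fin t'` is secure: a vertex swaps
with the guard of its own column. Conversely, let `S` be secure dominating. An empty leaf column
`j` forces the whole centre column into `S`, and a second empty leaf column `j'` is impossible: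
the only guard of `(0, j)` is `(0, 0)`, after which `(0, j')` is unguarded. An empty centre column
`0` forces two guards into one leaf column `k`: the guard `(0, k)` of `(0, 0)` leaves `(1, k)` to
another guard of column `k`. So at most one column is empty, and then two guards share a column,
whence `|S| ≥ t'`. -/

section CliqueFibers

variable {V ι : Type*} {G : SimpleGraph V} {f : V → ι} {S : Set V}

lemma dominating_of_surjOn (hf : ∀ x y, x ≠ y → f x = f y → G.Adj x y)
    (hS : Set.SurjOn f S Set.univ) : Dominating G S := by
  intro v hv
  obtain ⟨u, hu, huv⟩ := hS (Set.mem_univ (f v))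
  exact ⟨u, hu, hf u v (fun h => hv (h ▸ hu)) huv⟩

lemma secureDominating_of_surjOn (hf : ∀ x y, x ≠ y → f x = f y → G.Adj x y)
    (hS : Set.SurjOn f S Set.univ) : SecureDominating G S := by
  refine ⟨dominating_of_surjOn hf hS, fun v hv => ?_⟩
  obtain ⟨u, hu, huv⟩ := hS (Set.mem_univ (f v))
  refine ⟨u, hu, hf u v (fun h => hv (h ▸ hu)) huv, dominating_of_surjOn hf ?_⟩
  intro i _
  by_cases hi : i = f v
  · exact ⟨v, Or.inr rfl, hi.symm⟩
  · obtain ⟨x, hx, rfl⟩ := hS (Set.mem_univ i)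
    exact ⟨x, Or.inl ⟨hx, fun hxu => hi (by rw [Set.mem_singleton_iff.mp hxu, huv])⟩, rfl⟩

end CliqueFibers

lemma secDomNum_eq {V : Type*} {G : SimpleGraph V} {n : ℕ}
    (hex : ∃ S : Set V, SecureDominating G S ∧ S.ncard = n)
    (hle : ∀ S : Set V, SecureDominating G S → n ≤ S.ncard) : secDomNum G = n :=
  le_antisymm (Nat.sInf_le hex) (le_csInf ⟨n, hex⟩ fun _ ⟨S, hS, hSn⟩ => hSn ▸ hle S hS)

lemma card_le_ncard_of_not_injOn {γ β : Type*} [Finite β] {f : γ → β} {S : Set γ}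
    (hS : S.Finite) {j : β} (hcover : ∀ i ≠ j, i ∈ f '' S) (hf : ¬ Set.InjOn f S) :
    Nat.card β ≤ S.ncard := by
  have hcompl : Nat.card β - 1 ≤ (f '' S).ncard := by
    rw [← Set.ncard_singleton j, ← Set.ncard_compl]
    exact Set.ncard_le_ncard fun i hi => hcover i hi
  have himage : (f '' S).ncard < S.ncard :=
    lt_of_le_of_ne (Set.ncard_image_le hS) fun h => hf (Set.injOn_of_ncard_image_eq h hS)
  have : 0 < Nat.card β := Nat.card_pos_iff.mpr ⟨⟨j⟩, inferInstance⟩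
  omega

open SimpleGraph (completeGraph boxProd_adj)

def IsStar {β : Type*} (H : SimpleGraph β) (c : β) : Prop :=
  ∀ i j, H.Adj i j ↔ i ≠ j ∧ (i = c ∨ j = c)

section BoxProdComplete

variable {α β : Type*} {H : SimpleGraph β}

lemma boxProd_completeGraph_adj_of_snd_eq {x y : α × β} (hxy : x ≠ y) (h : x.2 = y.2) :
    (completeGraph α □ H).Adj x y :=
  boxProd_adj.mpr (Or.inl ⟨fun h1 => hxy (Prod.ext h1 h), h⟩)

lemma exists_secureDominating_boxProd_completeGraph [Nonempty α] :
    ∃ S : Set (α × β), SecureDominating (completeGraph α □ H) S ∧ S.ncard = Nat.card β := by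
  obtain ⟨z⟩ := ‹Nonempty α›
  refine ⟨Set.range (Prod.mk z), ?_, ?_⟩
  · exact secureDominating_of_surjOn (fun _ _ => boxProd_completeGraph_adj_of_snd_eq)
      fun j _ => ⟨(z, j), ⟨j, rfl⟩, rfl⟩
  · rw [← Set.image_univ, Set.ncard_image_of_injective _ (Prod.mk_right_injective z),
      Set.ncard_univ]

variable {c : β}

lemma eq_center_of_adj_of_empty_column (hH : IsStar H c) {S : Set (α × β)} {a : α} {j : β}
    (hjc : j ≠ c) (hj : j ∉ Prod.snd '' S) {u : α × β} (hu : u ∈ S)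
    (hadj : (completeGraph α □ H).Adj u (a, j)) : u = (a, c) := by
  rcases boxProd_adj.mp hadj with ⟨-, hu2⟩ | ⟨hH2, hu1⟩
  · exact absurd ⟨u, hu, hu2⟩ hj
  · exact Prod.ext hu1 (((hH _ _).mp hH2).2.resolve_right hjc)

lemma center_column_subset_of_empty_column (hH : IsStar H c)
    {S : Set (α × β)} (hS : Dominating (completeGraph α □ H) S) {j : β} (hjc : j ≠ c)
    (hj : j ∉ Prod.snd '' S) (a : α) : (a, c) ∈ S := by
  obtain ⟨u, hu, hadj⟩ := hS (a, j) fun h => hj ⟨_, h, rfl⟩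
  rwa [← eq_center_of_adj_of_empty_column hH hjc hj hu hadj]

lemma not_two_empty_leaf_columns [Nonempty α] (hH : IsStar H c)
    {S : Set (α × β)} (hS : SecureDominating (completeGraph α □ H) S) {j j' : β}
    (hjc : j ≠ c) (hj'c : j' ≠ c) (hjj' : j ≠ j') (hj : j ∉ Prod.snd '' S)
    (hj' : j' ∉ Prod.snd '' S) : False := by
  obtain ⟨z⟩ := ‹Nonempty α›
  obtain ⟨u, hu, hadj, hdom⟩ := hS.2 (z, j) fun h => hj ⟨_, h, rfl⟩
  have hu_eq := eq_center_of_adj_of_empty_column hH hjc hj hu hadj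
  have hw : (z, j') ∉ (S \ {u}) ∪ {(z, j)} := by
    rintro (⟨h, -⟩ | h)
    · exact hj' ⟨_, h, rfl⟩
    · exact hjj' (Prod.ext_iff.mp h).2.symm
  obtain ⟨x, hx | hx, hxadj⟩ := hdom _ hw
  · exact hx.2 (eq_center_of_adj_of_empty_column hH hj'c hj' hx.1 hxadj ▸ hu_eq.symm)
  · rw [Set.mem_singleton_iff.mp hx] at hxadj
    rcases boxProd_adj.mp hxadj with ⟨h, -⟩ | ⟨hH2, -⟩
    · exact h rfl
    · exact ((hH _ _).mp hH2).2.elim hjc hj'c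

lemma not_injOn_snd_of_empty_center_column [Nontrivial α] (hH : IsStar H c) {S : Set (α × β)}
    (hS : SecureDominating (completeGraph α □ H) S) (hc : c ∉ Prod.snd '' S) :
    ¬ Set.InjOn Prod.snd S := by
  obtain ⟨z⟩ := (inferInstance : Nonempty α)
  obtain ⟨a', ha'⟩ := exists_ne z
  obtain ⟨u, hu, hadj, hdom⟩ := hS.2 (z, c) fun h => hc ⟨_, h, rfl⟩
  have hu2 : u.2 ≠ c := fun h => hc ⟨u, hu, h⟩
  have hu1 : u.1 = z := by
    rcases boxProd_adj.mp hadj with ⟨-, h⟩ | ⟨-, h⟩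
    · exact absurd h hu2
    · exact h
  have hwu : (a', u.2) ≠ u := fun h => ha' ((congrArg Prod.fst h).trans hu1)
  intro hinj
  by_cases hwS : (a', u.2) ∈ S
  · exact hwu (hinj hwS hu rfl)
  have hw : (a', u.2) ∉ (S \ {u}) ∪ {(z, c)} := by
    rintro (⟨h, -⟩ | h)
    · exact hwS h
    · exact hu2 (Prod.ext_iff.mp h).2
  obtain ⟨x, hx | hx, hxadj⟩ := hdom _ hw
  · rcases boxProd_adj.mp hxadj with ⟨-, h⟩ | ⟨hH2, -⟩
    · exact hx.2 (hinj hx.1 hu h)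
    · exact ((hH _ _).mp hH2).2.elim (fun h => hc ⟨x, hx.1, h⟩) hu2
  · rw [Set.mem_singleton_iff.mp hx] at hxadj
    rcases boxProd_adj.mp hxadj with ⟨-, h⟩ | ⟨-, h⟩
    · exact hu2 h.symm
    · exact ha' h.symm

lemma card_le_ncard_of_secureDominating [Nontrivial α] [Finite α] [Finite β]
    (hH : IsStar H c) {S : Set (α × β)}
    (hS : SecureDominating (completeGraph α □ H) S) : Nat.card β ≤ S.ncard := by
  by_cases hall : Prod.snd '' S = Set.univ
  · rw [← Set.ncard_univ, ← hall]
    exact Set.ncard_image_le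
  obtain ⟨j, hj⟩ : ∃ j, j ∉ Prod.snd '' S := by
    by_contra! h
    exact hall (Set.eq_univ_of_forall h)
  obtain ⟨z⟩ := (inferInstance : Nonempty α)
  obtain ⟨a', ha'⟩ := exists_ne z
  refine card_le_ncard_of_not_injOn (f := Prod.snd) S.toFinite (j := j) (fun i hij => ?_) ?_
  · by_contra hi
    by_cases hjc : j = c
    · subst hjc
      exact hj ⟨_, center_column_subset_of_empty_column hH hS.1 hij hi z, rfl⟩
    by_cases hic : i = c
    · exact hi ⟨_, hic ▸ center_column_subset_of_empty_column hH hS.1 hjc hj z, rfl⟩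
    · exact not_two_empty_leaf_columns hH hS hjc hic hij.symm hj hi
  · by_cases hjc : j = c
    · exact not_injOn_snd_of_empty_center_column hH hS (hjc ▸ hj)
    · have hcol := center_column_subset_of_empty_column hH hS.1 hjc hj
      exact fun hinj => ha' (congrArg Prod.fst (hinj (hcol a') (hcol z) rfl))

end BoxProdComplete

lemma isStar_starGraph {t : ℕ} (ht : 0 < t) : IsStar (starGraph t) ⟨0, ht⟩ := by
  intro i j
  simp only [starGraph, SimpleGraph.fromRel_adj, Fin.ext_iff]

theorem stmt19 (t t' : ℕ) (ht : 2 ≤ t) (ht' : 2 ≤ t') :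
    secDomNum ((SimpleGraph.completeGraph (Fin t)).boxProd (starGraph t')) = t' := by
  have : Nontrivial (Fin t) := Fin.nontrivial_iff_two_le.mpr ht
  refine (secDomNum_eq exists_secureDominating_boxProd_completeGraph fun S hS => ?_).trans
    (Nat.card_fin t')
  exact card_le_ncard_of_secureDominating (isStar_starGraph (by omega : 0 < t')) hS
end
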